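/- Let A be a valued σ-structure. If there exists a mapping c : Tup(A) → ℚ≥0 such that for every non-surjective mapping g : A → A, Σ_{(f,x)} f^A(x)·c(f,x) < Σ_{(f,x)} f^A(x)·c(f, g(x)), then A is a core. -/

import Mathlib

open scoped Classical
noncomputable section

/-- The value codomain `ℚ≥0 ∪ {∞}`. -/
abbrev Val : Type := WithTop NNRat

/-- A valued structure over a signature given by a type `S` of function symbols
with arities `ar`. -/
structure VStruct (S : Type) (ar : S → ℕ) where
  U : Type
  [fintypeU : Fintype U]
  [decU : DecidableEq U]
  [nonemptyU : Nonempty U]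
  val : (f : S) → (Fin (ar f) → U) → Val

attribute [instance] VStruct.fintypeU VStruct.decU VStruct.nonemptyU

variable {S : Type} [Fintype S] {ar : S → ℕ}

/-- Cost of a mapping `h` between the universes of two valued structures. -/
def VStruct.cost (A B : VStruct S ar) (h : A.U → B.U) : Val :=
  ∑ f : S, ∑ x : Fin (ar f) → A.U, A.val f x * B.val f (h ∘ x)

/-- `opt(A,B)`: the minimum cost over all mappings. -/
def VStruct.opt (A B : VStruct S ar) : Val :=
  Finset.univ.inf' Finset.univ_nonempty (A.cost B)

/-- `f^A(g⁻¹(x))`: sum of `f^A` over the `g`-preimage of the tuple `x`. -/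
def VStruct.preSum (A B : VStruct S ar) (g : A.U → B.U) (f : S)
    (x : Fin (ar f) → B.U) : Val :=
  ∑ y ∈ Finset.univ.filter (fun y : Fin (ar f) → A.U => g ∘ y = x), A.val f y

/-- Inverse fractional homomorphism from `A` to `B`. -/
def IsIFH (A B : VStruct S ar) (ω : (A.U → B.U) → NNRat) : Prop :=
  (∑ g : A.U → B.U, ω g) = 1 ∧
  ∀ (f : S) (x : Fin (ar f) → B.U),
    (∑ g : A.U → B.U, (ω g : Val) * A.preSum B g f x) ≤ B.val f x

/-- `A ≼ B`: `A` improves `B`. -/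
def Improves (A B : VStruct S ar) : Prop :=
  ∀ C : VStruct S ar, A.opt C ≤ B.opt C

/-- Valued equivalence. -/
def VEquiv (A B : VStruct S ar) : Prop :=
  ∀ C : VStruct S ar, A.opt C = B.opt C

/-- A valued structure is a core if every inverse fractional homomorphism from
it to itself has only surjective mappings in its support. -/
def IsCore (A : VStruct S ar) : Prop :=
  ∀ ω : (A.U → A.U) → NNRat, IsIFH A A ω →
    ∀ g : A.U → A.U, 0 < ω g → Function.Surjective g

/-!
Let `A^c` be the structure on the universe of `A` whose values are the weights `c`, and let
`h : A → A^c` be a mapping of minimum cost. Averaging `h ∘ g` over an inverse fractional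
homomorphism `ω` costs at most the cost of `h`, so every `g` in the support of `ω` keeps
`h ∘ g` optimal. If such a `g` were not surjective, neither would be `h ∘ g`, and the
hypothesis on `c` says exactly that the identity then costs strictly less than `h ∘ g`.
-/

open Finset

lemma WithTop.le_of_coe_mul_le_coe_mul {a : ℚ≥0} (ha : a ≠ 0) {x y : WithTop ℚ≥0}
    (h : (a : WithTop ℚ≥0) * x ≤ a * y) : x ≤ y := by
  simpa [← mul_assoc, ← WithTop.coe_mul, inv_mul_cancel₀ ha] using
    mul_le_mul_right h ((a⁻¹ : ℚ≥0) : WithTop ℚ≥0)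

lemma WithTop.eq_of_sum_mul_le_of_forall_le {ι : Type*} [Fintype ι] {ω : ι → ℚ≥0}
    (hω : ∑ i, ω i = 1) {F : ι → WithTop ℚ≥0} {m : WithTop ℚ≥0} (hF : ∀ i, m ≤ F i)
    (hsum : ∑ i, (ω i : WithTop ℚ≥0) * F i ≤ m) {i : ι} (hi : 0 < ω i) : F i = m := by
  refine le_antisymm ?_ (hF i)
  obtain rfl | hm := eq_or_ne m ⊤
  · exact le_top
  set R := ∑ j ∈ univ.erase i, (ω j : WithTop ℚ≥0) * m
  have hsplit_m : (ω i : WithTop ℚ≥0) * m + R = m := by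
    rw [add_sum_erase _ (fun j => (ω j : WithTop ℚ≥0) * m) (mem_univ i), ← sum_mul,
      ← WithTop.coe_sum, hω, WithTop.coe_one, one_mul]
  have hR : R ≠ ⊤ := ((hsplit_m ▸ le_add_self : R ≤ m).trans_lt hm.lt_top).ne
  have hle : (ω i : WithTop ℚ≥0) * F i + R ≤ ω i * m + R :=
    calc (ω i : WithTop ℚ≥0) * F i + R
        ≤ (ω i : WithTop ℚ≥0) * F i + ∑ j ∈ univ.erase i, (ω j : WithTop ℚ≥0) * F j :=
          add_le_add_right (sum_le_sum fun j _ => mul_le_mul_right (hF j) _) _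
      _ = ∑ j, (ω j : WithTop ℚ≥0) * F j :=
          add_sum_erase _ (fun j => (ω j : WithTop ℚ≥0) * F j) (mem_univ i)
      _ ≤ ω i * m + R := hsplit_m.symm ▸ hsum
  exact WithTop.le_of_coe_mul_le_coe_mul hi.ne' ((WithTop.add_le_add_iff_right hR).mp hle)

lemma Function.Surjective.of_comp_of_finite {α : Type*} [Finite α] {h g : α → α}
    (hs : Function.Surjective (h ∘ g)) : Function.Surjective g :=
  hs.of_comp_left (Finite.injective_iff_surjective.mpr hs.of_comp)

namespace VStruct

/-- The structure `A^c` on the universe of `A` whose values are the weights `c`. -/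
def ofWeights (A : VStruct S ar) (c : (f : S) → (Fin (ar f) → A.U) → ℚ≥0) :
    VStruct S ar where
  U := A.U
  val f x := c f x

lemma opt_le_cost (A B : VStruct S ar) (h : A.U → B.U) : A.opt B ≤ A.cost B h :=
  inf'_le _ (mem_univ h)

lemma exists_cost_eq_opt (A B : VStruct S ar) : ∃ h : A.U → B.U, A.cost B h = A.opt B := by
  obtain ⟨h, -, hh⟩ := exists_mem_eq_inf' univ_nonempty (A.cost B)
  exact ⟨h, hh.symm⟩

lemma cost_comp (A B : VStruct S ar) (g : A.U → A.U) (h : A.U → B.U) :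
    A.cost B (h ∘ g) = ∑ f : S, ∑ x : Fin (ar f) → A.U, A.preSum A g f x * B.val f (h ∘ x) := by
  refine sum_congr rfl fun f _ => ?_
  rw [← sum_fiberwise univ (fun y : Fin (ar f) → A.U => g ∘ y)]
  refine sum_congr rfl fun x _ => ?_
  rw [preSum, sum_mul]
  refine sum_congr rfl fun y hy => ?_
  rw [← (mem_filter.mp hy).2]
  rfl

end VStruct

namespace IsIFH

variable {A B : VStruct S ar} {ω : (A.U → A.U) → ℚ≥0}

lemma sum_mul_cost_comp_le (hω : IsIFH A A ω) (h : A.U → B.U) :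
    ∑ g, (ω g : Val) * A.cost B (h ∘ g) ≤ A.cost B h :=
  calc ∑ g, (ω g : Val) * A.cost B (h ∘ g)
      = ∑ f : S, ∑ x : Fin (ar f) → A.U,
          (∑ g, (ω g : Val) * A.preSum A g f x) * B.val f (h ∘ x) := by
        simp_rw [VStruct.cost_comp, mul_sum, sum_mul, mul_assoc]
        rw [sum_comm]
        exact sum_congr rfl fun f _ => sum_comm
    _ ≤ A.cost B h :=
        sum_le_sum fun f _ => sum_le_sum fun x _ => mul_le_mul_left (hω.2 f x) _

lemma cost_comp_eq_opt (hω : IsIFH A A ω) {h : A.U → B.U} (hh : A.cost B h = A.opt B)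
    {g : A.U → A.U} (hg : 0 < ω g) : A.cost B (h ∘ g) = A.opt B :=
  WithTop.eq_of_sum_mul_le_of_forall_le hω.1 (fun g' => A.opt_le_cost B (h ∘ g'))
    (hh ▸ hω.sum_mul_cost_comp_le h) hg

end IsIFH

/-- Sufficient condition for being a core: existence of a weighting `c` making
every non-surjective self-map strictly suboptimal. -/
theorem stmt10 (A : VStruct S ar)
    (c : (f : S) → (Fin (ar f) → A.U) → NNRat)
    (hc : ∀ g : A.U → A.U, ¬ Function.Surjective g →
      (∑ f : S, ∑ x : Fin (ar f) → A.U, A.val f x * (c f x : Val)) <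
      (∑ f : S, ∑ x : Fin (ar f) → A.U, A.val f x * (c f (g ∘ x) : Val))) :
    IsCore A := by
  intro ω hω g hg
  by_contra hns
  let C := A.ofWeights c
  obtain ⟨h, hh⟩ := A.exists_cost_eq_opt C
  have hhg : ¬ Function.Surjective (h ∘ g) := fun hs => hns hs.of_comp_of_finite
  have hlt : A.cost C id < A.cost C (h ∘ g) := hc (h ∘ g) hhg
  exact (A.opt_le_cost C id).not_gt (hω.cost_comp_eq_opt hh hg ▸ hlt)
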